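/- For 0 < a < 1/2 and 0 < t ≤ π/2, one has a·B_{sin² t}(a, 1−a) ≥ t·(cot t)^(1−2a). -/

import Mathlib

/-!
Put `F u = a B_{sin² u}(a, 1 - a) - u cot^(1-2a) u`. The substitution `s = sin² u` turns the
Beta integrand into `d/du B_{sin² u}(a, 1 - a) = 2 cot^(1-2a) u`, so that
`F' u = (1 - 2a) (u cot^(-2a) u / sin² u - cot^(1-2a) u)`, which is nonnegative because
`sin u cos u ≤ u`. Hence `F` is nondecreasing on `[0, π/2)` and `F t ≥ F 0 = 0`; at `t = π/2`
the right-hand side vanishes.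
-/

open Real MeasureTheory Set

/-- The incomplete Beta function `B_x(a,b) = ∫_0^x s^(a-1) (1-s)^(b-1) ds`. -/
noncomputable def incBeta (a b x : ℝ) : ℝ :=
  ∫ s in (0:ℝ)..x, s ^ (a - 1) * (1 - s) ^ (b - 1)

open Filter Topology

section IncBeta

variable {a b : ℝ}

lemma incBeta_nonneg {x : ℝ} (hx₀ : 0 ≤ x) (hx₁ : x ≤ 1) : 0 ≤ incBeta a b x :=
  intervalIntegral.integral_nonneg hx₀ fun _ hs =>
    mul_nonneg (rpow_nonneg hs.1 _) (rpow_nonneg (by linarith [hs.2]) _)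

lemma intervalIntegrable_incBeta_integrand (ha : 0 < a) {p q : ℝ} (hp : p < 1) (hq : q < 1) :
    IntervalIntegrable (fun s => s ^ (a - 1) * (1 - s) ^ (b - 1)) volume p q := by
  refine (intervalIntegral.intervalIntegrable_rpow' (by linarith)).mul_continuousOn ?_
  exact (continuousOn_const.sub continuousOn_id).rpow_const fun s hs =>
    Or.inl (sub_pos.mpr (hs.2.trans_lt (max_lt hp hq))).ne'

lemma continuousAt_incBeta (ha : 0 < a) {x : ℝ} (hx : x < 1) : ContinuousAt (incBeta a b) x := by
  obtain ⟨p, q, hp, hq, hp₀, hq₀, hq₁⟩ :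
      ∃ p q : ℝ, p < x ∧ x < q ∧ p ≤ 0 ∧ 0 ≤ q ∧ q < 1 := by
    refine ⟨min x 0 - 1, (max x 0 + 1) / 2, ?_, ?_, ?_, ?_, ?_⟩ <;>
      linarith [min_le_left x 0, min_le_right x 0, le_max_left x 0, le_max_right x 0,
        max_lt hx one_pos]
  have hcont := intervalIntegral.continuousOn_primitive_interval'
    (intervalIntegrable_incBeta_integrand (b := b) ha (hp.trans (hq.trans hq₁)) hq₁)
    (mem_uIcc_of_le hp₀ hq₀)
  rw [uIcc_of_le (hp.trans hq).le] at hcont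
  exact hcont.continuousAt (Icc_mem_nhds hp hq)

lemma hasDerivAt_incBeta (ha : 0 < a) {x : ℝ} (hx₀ : 0 < x) (hx₁ : x < 1) :
    HasDerivAt (incBeta a b) (x ^ (a - 1) * (1 - x) ^ (b - 1)) x := by
  have hcont : ContinuousAt (fun s => s ^ (a - 1) * (1 - s) ^ (b - 1)) x :=
    (continuousAt_id.rpow_const (Or.inl hx₀.ne')).mul
      ((continuousAt_const.sub continuousAt_id).rpow_const (Or.inl (sub_pos.mpr hx₁).ne'))
  have hmeas : Measurable fun s : ℝ => s ^ (a - 1) * (1 - s) ^ (b - 1) := by fun_prop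
  exact intervalIntegral.integral_hasDerivAt_right
    (intervalIntegrable_incBeta_integrand ha zero_lt_one hx₁)
    hmeas.stronglyMeasurable.stronglyMeasurableAtFilter hcont

end IncBeta

lemma sin_mul_cos_le {u : ℝ} (hu : 0 ≤ u) : sin u * cos u ≤ u := by
  have := sin_le (by linarith : 0 ≤ 2 * u)
  rw [sin_two_mul] at this
  linarith

lemma cos_div_sin_le_inv {v : ℝ} (hv₀ : 0 < v) (hv : v < π / 2) :
    cos v / sin v ≤ v⁻¹ := by
  have hs := sin_pos_of_pos_of_lt_pi hv₀ (by linarith [pi_pos])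
  have hc := cos_pos_of_mem_Ioo ⟨by linarith, hv⟩
  have := lt_tan hv₀ hv
  rw [tan_eq_sin_div_cos, lt_div_iff₀ hc] at this
  rw [div_le_iff₀ hs, ← div_eq_inv_mul, le_div_iff₀ hv₀]
  linarith

lemma cos_div_sin_pos {u : ℝ} (hu₀ : 0 < u) (hu : u < π / 2) : 0 < cos u / sin u :=
  div_pos (cos_pos_of_mem_Ioo ⟨by linarith [pi_pos], hu⟩)
    (sin_pos_of_pos_of_lt_pi hu₀ (by linarith [pi_pos]))

lemma sq_rpow_sub_one_mul_sq_rpow_neg_mul {s c : ℝ} (hs : 0 < s) (hc : 0 < c) (a : ℝ) :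
    (s ^ 2) ^ (a - 1) * (c ^ 2) ^ (-a) * (s * c) = (c / s) ^ (1 - 2 * a) := by
  obtain ⟨x, rfl⟩ : ∃ x, s = exp x := ⟨log s, (exp_log hs).symm⟩
  obtain ⟨y, rfl⟩ : ∃ y, c = exp y := ⟨log c, (exp_log hc).symm⟩
  simp only [← exp_nat_mul, ← exp_mul, ← exp_sub, ← exp_add]
  congr 1
  push_cast
  ring

lemma hasDerivAt_incBeta_sin_sq {a u : ℝ} (ha : 0 < a) (hu₀ : 0 < u) (hu : u < π / 2) :
    HasDerivAt (fun u => incBeta a (1 - a) (sin u ^ 2)) (2 * (cos u / sin u) ^ (1 - 2 * a)) u := by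
  have hs := sin_pos_of_pos_of_lt_pi hu₀ (by linarith [pi_pos])
  have hc := cos_pos_of_mem_Ioo ⟨by linarith, hu⟩
  have hsq : sin u ^ 2 < 1 := by nlinarith [sin_sq_add_cos_sq u]
  refine ((hasDerivAt_incBeta (b := 1 - a) ha (by positivity) hsq).comp u
    ((hasDerivAt_sin u).pow 2)).congr_deriv ?_
  rw [← cos_sq', sub_sub_cancel_left, ← sq_rpow_sub_one_mul_sq_rpow_neg_mul hs hc]
  push_cast
  ring

lemma hasDerivAt_mul_cot_rpow {c u : ℝ} (hu₀ : 0 < u) (hu : u < π / 2) :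
    HasDerivAt (fun u => u * (cos u / sin u) ^ c)
      ((cos u / sin u) ^ c - c * u * (cos u / sin u) ^ (c - 1) / sin u ^ 2) u := by
  have hs := sin_pos_of_pos_of_lt_pi hu₀ (by linarith [pi_pos])
  have hcot : HasDerivAt (fun u => cos u / sin u) (-(1 / sin u ^ 2)) u := by
    refine ((hasDerivAt_cos u).div (hasDerivAt_sin u) hs.ne').congr_deriv ?_
    field_simp
    linear_combination -sin_sq_add_cos_sq u
  refine ((hasDerivAt_id' u).mul
    (hcot.rpow_const (p := c) (Or.inl (cos_div_sin_pos hu₀ hu).ne'))).congr_deriv ?_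
  ring

lemma cot_rpow_le {c u : ℝ} (hu₀ : 0 < u) (hu : u < π / 2) :
    (cos u / sin u) ^ c ≤ u * (cos u / sin u) ^ (c - 1) / sin u ^ 2 := by
  have hs := sin_pos_of_pos_of_lt_pi hu₀ (by linarith [pi_pos])
  have hc := cos_pos_of_mem_Ioo ⟨by linarith, hu⟩
  rw [rpow_sub_one (cos_div_sin_pos hu₀ hu).ne',
    show u * ((cos u / sin u) ^ c / (cos u / sin u)) / sin u ^ 2
      = (cos u / sin u) ^ c * (u / (sin u * cos u)) by field_simp]
  exact le_mul_of_one_le_right (by positivity)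
    ((one_le_div (by positivity)).mpr (sin_mul_cos_le hu₀.le))

lemma tendsto_mul_cot_rpow_nhdsGE_zero {c : ℝ} (hc₀ : 0 ≤ c) (hc₁ : c < 1) :
    Tendsto (fun v => v * (cos v / sin v) ^ c) (𝓝[≥] 0) (𝓝 0) := by
  have hlim : Tendsto (fun v : ℝ => v ^ (1 - c)) (𝓝[≥] 0) (𝓝 0) := by
    simpa [zero_rpow (by linarith : 1 - c ≠ 0)] using
      (continuousAt_rpow_const 0 (1 - c) (Or.inr (by linarith))).tendsto.mono_left
        nhdsWithin_le_nhds
  refine squeeze_zero' ?_ ?_ hlim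
  · filter_upwards [Icc_mem_nhdsGE (half_pos pi_pos)] with v hv
    have hcot : 0 ≤ cos v / sin v :=
      div_nonneg (cos_nonneg_of_mem_Icc ⟨by linarith [pi_pos, hv.1], hv.2⟩)
        (sin_nonneg_of_nonneg_of_le_pi hv.1 (by linarith [pi_pos, hv.2]))
    exact mul_nonneg hv.1 (rpow_nonneg hcot _)
  · filter_upwards [Ico_mem_nhdsGE (half_pos pi_pos)] with v hv
    rcases hv.1.eq_or_lt with rfl | hv₀
    · rw [zero_mul]
      exact rpow_nonneg le_rfl _
    calc v * (cos v / sin v) ^ c ≤ v * v⁻¹ ^ c :=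
          mul_le_mul_of_nonneg_left (rpow_le_rpow (cos_div_sin_pos hv₀ hv.2).le
            (cos_div_sin_le_inv hv₀ hv.2) hc₀) hv₀.le
      _ = v ^ (1 - c) := by rw [inv_rpow hv₀.le, rpow_sub hv₀, rpow_one, div_eq_mul_inv]

lemma monotoneOn_incBeta_sin_sq_sub_mul_cot_rpow {a : ℝ} (ha : 0 < a) (ha' : a < 1 / 2) :
    MonotoneOn (fun u => a * incBeta a (1 - a) (sin u ^ 2) - u * (cos u / sin u) ^ (1 - 2 * a))
      (Ico 0 (π / 2)) := by
  have hderiv := fun u (hu : u ∈ Ioo 0 (π / 2)) =>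
    ((hasDerivAt_incBeta_sin_sq ha hu.1 hu.2).const_mul a).sub
      (hasDerivAt_mul_cot_rpow (c := 1 - 2 * a) hu.1 hu.2)
  rw [← interior_Ico (a := (0 : ℝ)) (b := π / 2)] at hderiv
  refine monotoneOn_of_hasDerivWithinAt_nonneg (convex_Ico 0 (π / 2)) (fun u hu => ?_)
    (fun u hu => (hderiv u hu).hasDerivWithinAt) (fun u hu => ?_)
  · rcases hu.1.eq_or_lt with rfl | hu₀
    · have hB : ContinuousAt (fun u => a * incBeta a (1 - a) (sin u ^ 2)) 0 :=
        continuousAt_const.mul ((continuousAt_incBeta ha (by simp)).comp (by fun_prop))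
      have hG : ContinuousWithinAt (fun v => v * (cos v / sin v) ^ (1 - 2 * a))
          (Ico 0 (π / 2)) 0 := by
        simpa [ContinuousWithinAt] using
          (tendsto_mul_cot_rpow_nhdsGE_zero (c := 1 - 2 * a) (by linarith) (by linarith)).mono_left
            (nhdsWithin_mono _ Ico_subset_Ici_self)
      exact hB.continuousWithinAt.sub hG
    · have hu' : u ∈ interior (Ico 0 (π / 2)) := by rw [interior_Ico]; exact ⟨hu₀, hu.2⟩
      exact (hderiv u hu').continuousAt.continuousWithinAt
  · rw [interior_Ico] at hu
    calc (0 : ℝ) ≤ (1 - 2 * a) * (u * (cos u / sin u) ^ (1 - 2 * a - 1) / sin u ^ 2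
          - (cos u / sin u) ^ (1 - 2 * a)) :=
          mul_nonneg (by linarith) (sub_nonneg.mpr (cot_rpow_le hu.1 hu.2))
      _ = _ := by ring

theorem incBeta_sin_sq_ge_cot (a t : ℝ) (ha : 0 < a) (ha' : a < 1 / 2)
    (ht : 0 < t) (ht' : t ≤ Real.pi / 2) :
    a * incBeta a (1 - a) (Real.sin t ^ 2) ≥
      t * (Real.cos t / Real.sin t) ^ (1 - 2 * a) := by
  rcases ht'.eq_or_lt with rfl | ht'
  · rw [cos_pi_div_two, zero_div, zero_rpow (by linarith), mul_zero]
    exact mul_nonneg ha.le (incBeta_nonneg (sq_nonneg _) (sin_sq_le_one _))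
  · have := monotoneOn_incBeta_sin_sq_sub_mul_cot_rpow ha ha' ⟨le_rfl, pi_div_two_pos⟩
      ⟨ht.le, ht'⟩ ht.le
    simpa [incBeta] using this
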